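/- arXiv:1501.05170 — 2 statements merged into one kernel-verified Lean document; each statement's English description precedes it below -/
import Mathlib

section
/- Let A = ⟨X⟩ and B = ⟨Y⟩ be finitely generated groups with symmetric generating sets X and Y, n ≥ 2, and let G_n = A(n)B be their n-th nilpotent product, generated by X ∪ Y. If A = C_A(B) or B = C_B(A), then max{pw(A, X), pw(B, Y)} ≤ pw(G_n, X ∪ Y) ≤ pw(A, X) + pw(B, Y). -/
open Monoid

section PalindromicWidth

/-- `g` is a palindrome with respect to the (symmetric) generating set `X`:
some word over `X` representing `g` equals its own reverse. -/
def IsPalindrome {G : Type*} [Group G] (X : Set G) (g : G) : Prop :=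
  ∃ w : List G, (∀ a ∈ w, a ∈ X) ∧ w.reverse = w ∧ w.prod = g

/-- The palindromic length of `g` with respect to `X`, valued in `ℕ∞`:
the least `k` such that `g` is a product of `k` palindromes. -/
noncomputable def palLength {G : Type*} [Group G] (X : Set G) (g : G) : ℕ∞ :=
  sInf {k : ℕ∞ | ∃ L : List G, (L.length : ℕ∞) = k ∧ (∀ p ∈ L, IsPalindrome X p) ∧ L.prod = g}

/-- The palindromic width `pw(G, X) = sup_{g ∈ G} l_P(g)`, valued in `ℕ∞`. -/
noncomputable def palWidth (G : Type*) [Group G] (X : Set G) : ℕ∞ :=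
  ⨆ g : G, palLength X g

end PalindromicWidth

section NilpotentProduct

variable (A B : Type*) [Group A] [Group B] (n : ℕ)

/-- The Cartesian subgroup `[A,B]` of the free product `A ∗ B`: the kernel of the
natural homomorphism `A ∗ B →* A × B`. -/
def cartesianSubgroup : Subgroup (Coprod A B) := MonoidHom.ker (Coprod.toProd)

/-- The normal subgroup `[A,B] ∩ γ_{n+1}(A ∗ B)` defining the `n`-th nilpotent product.
(Here `lowerCentralSeries H n = γ_{n+1}(H)` since Mathlib's indexing starts at `0`.) -/
def nilProdKer : Subgroup (Coprod A B) :=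
  cartesianSubgroup A B ⊓ (⊤ : Subgroup (Coprod A B)).lowerCentralSeries n

instance : (nilProdKer A B n).Normal := by
  have h1 : (cartesianSubgroup A B).Normal := MonoidHom.normal_ker _
  have h2 : ((⊤ : Subgroup (Coprod A B)).lowerCentralSeries n).Normal := inferInstance
  exact Subgroup.normal_inf_normal _ _

/-- The `n`-th nilpotent product `A(n)B = (A ∗ B) / ([A,B] ∩ γ_{n+1}(A ∗ B))`. -/
abbrev NilProd := Coprod A B ⧸ nilProdKer A B n

/-- The canonical embedding of `A` into `A(n)B`. -/
def nilProdInl : A →* NilProd A B n := (QuotientGroup.mk' _).comp Coprod.inl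

/-- The canonical embedding of `B` into `A(n)B`. -/
def nilProdInr : B →* NilProd A B n := (QuotientGroup.mk' _).comp Coprod.inr

/-- `C_A(B)`: the centralizer of (the canonical copy of) `B`, as a subgroup of `A`. -/
def CA : Subgroup A :=
  (Subgroup.centralizer (Set.range (nilProdInr A B n))).comap (nilProdInl A B n)

/-- `C_B(A)`: the centralizer of (the canonical copy of) `A`, as a subgroup of `B`. -/
def CB : Subgroup B :=
  (Subgroup.centralizer (Set.range (nilProdInl A B n))).comap (nilProdInr A B n)

end NilpotentProduct


/-!
Projecting `A(n)B` onto either factor sends every generator to a generator or to `1`, so it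
does not increase palindromic length; since the projection is onto, this gives the lower bound.
When the two canonical copies of `A` and `B` commute, the quotient map `A ∗ B → A(n)B` factors
through `A × B`, so every element is a product `a b` with `a ∈ A`, `b ∈ B`, and
`l_P(a b) ≤ l_P(a) + l_P(b)` gives the upper bound.
-/

open Set

section PalindromicLength

variable {G H : Type*} [Group G] [Group H]

theorem palLength_le_length {X : Set G} {g : G} (L : List G) (hL : ∀ p ∈ L, IsPalindrome X p)
    (hprod : L.prod = g) : palLength X g ≤ L.length :=
  sInf_le ⟨L, rfl, hL, hprod⟩

theorem exists_list_length_eq_palLength {X : Set G} {g : G} (h : palLength X g ≠ ⊤) :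
    ∃ L : List G, (L.length : ℕ∞) = palLength X g ∧ (∀ p ∈ L, IsPalindrome X p) ∧ L.prod = g := by
  refine csInf_mem (s := {k : ℕ∞ | ∃ L : List G, (L.length : ℕ∞) = k ∧
    (∀ p ∈ L, IsPalindrome X p) ∧ L.prod = g}) (nonempty_iff_ne_empty.2 fun hempty => h ?_)
  rw [palLength, hempty, sInf_empty]

theorem palLength_mul_le (X : Set G) (g h : G) :
    palLength X (g * h) ≤ palLength X g + palLength X h := by
  by_cases hg : palLength X g = ⊤
  · simp [hg]
  by_cases hh : palLength X h = ⊤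
  · simp [hh]
  obtain ⟨L, hLlen, hL, rfl⟩ := exists_list_length_eq_palLength hg
  obtain ⟨M, hMlen, hM, rfl⟩ := exists_list_length_eq_palLength hh
  calc palLength X (L.prod * M.prod) ≤ (L ++ M).length :=
        palLength_le_length _ (fun p hp => (List.mem_append.1 hp).elim (hL p) (hM p))
          List.prod_append
    _ = palLength X L.prod + palLength X M.prod := by
        rw [List.length_append, Nat.cast_add, hLlen, hMlen]

/-- Letters sent to `1` are deleted from the image word, which keeps it a palindrome. -/
theorem IsPalindrome.map (f : G →* H) {X : Set G} {Z : Set H} (hf : MapsTo f X (insert 1 Z))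
    {g : G} (hg : IsPalindrome X g) : IsPalindrome Z (f g) := by
  classical
  obtain ⟨w, hw, hrev, rfl⟩ := hg
  refine ⟨(w.map f).filter (· != 1), fun a ha => ?_, ?_, ?_⟩
  · obtain ⟨ha, hne⟩ := List.mem_filter.1 ha
    obtain ⟨x, hx, rfl⟩ := List.mem_map.1 ha
    exact (hf (hw x hx)).resolve_left (by simpa using hne)
  · rw [← List.filter_reverse, ← List.map_reverse, hrev]
  · rw [List.prod_filter_bne_one, map_list_prod]

theorem palLength_map_le (f : G →* H) {X : Set G} {Z : Set H} (hf : MapsTo f X (insert 1 Z))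
    (g : G) : palLength Z (f g) ≤ palLength X g := by
  by_cases hg : palLength X g = ⊤
  · simp [hg]
  obtain ⟨L, hLlen, hL, rfl⟩ := exists_list_length_eq_palLength hg
  calc palLength Z (f L.prod) ≤ (L.map f).length :=
        palLength_le_length _ (by simpa using fun p hp => (hL p hp).map f hf)
          (map_list_prod f L).symm
    _ = palLength X L.prod := by rw [List.length_map, hLlen]

theorem palWidth_le_of_surjective (f : H →* G) (hf : Function.Surjective f) {X : Set G}
    {Z : Set H} (hZ : MapsTo f Z (insert 1 X)) : palWidth G X ≤ palWidth H Z :=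
  iSup_le fun g => by
    obtain ⟨h, rfl⟩ := hf g
    exact (palLength_map_le f hZ h).trans (le_iSup (palLength Z) h)

theorem palWidth_le_add_of_forall_eq_mul {K : Type*} [Group K] (f : G →* K) (g : H →* K)
    {X : Set G} {Y : Set H} {Z : Set K} (hX : MapsTo f X Z) (hY : MapsTo g Y Z)
    (hfg : ∀ k : K, ∃ a b, f a * g b = k) : palWidth K Z ≤ palWidth G X + palWidth H Y :=
  iSup_le fun k => by
    obtain ⟨a, b, rfl⟩ := hfg k
    calc palLength Z (f a * g b) ≤ palLength Z (f a) + palLength Z (g b) := palLength_mul_le ..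
      _ ≤ palLength X a + palLength Y b :=
          add_le_add (palLength_map_le f (hX.mono_right (subset_insert 1 Z)) a)
            (palLength_map_le g (hY.mono_right (subset_insert 1 Z)) b)
      _ ≤ palWidth G X + palWidth H Y := add_le_add (le_iSup _ a) (le_iSup _ b)

end PalindromicLength

section NilpotentProduct

variable (A B : Type*) [Group A] [Group B] (n : ℕ)

def nilProdToProd : NilProd A B n →* A × B :=
  QuotientGroup.lift _ Coprod.toProd fun _ hx => hx.1

@[simp]
theorem nilProdToProd_inl (a : A) : nilProdToProd A B n (nilProdInl A B n a) = (a, 1) := rfl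

@[simp]
theorem nilProdToProd_inr (b : B) : nilProdToProd A B n (nilProdInr A B n b) = (1, b) := rfl

variable {A B n}

theorem commute_nilProdInl_nilProdInr (hcent : CA A B n = ⊤ ∨ CB A B n = ⊤) (a : A) (b : B) :
    Commute (nilProdInl A B n a) (nilProdInr A B n b) := by
  rcases hcent with h | h
  · have ha : a ∈ CA A B n := h ▸ Subgroup.mem_top a
    exact (Subgroup.mem_centralizer_iff.1 (Subgroup.mem_comap.1 ha) _ ⟨b, rfl⟩).symm
  · have hb : b ∈ CB A B n := h ▸ Subgroup.mem_top b
    exact Subgroup.mem_centralizer_iff.1 (Subgroup.mem_comap.1 hb) _ ⟨a, rfl⟩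

theorem exists_nilProdInl_mul_nilProdInr
    (hcomm : ∀ a b, Commute (nilProdInl A B n a) (nilProdInr A B n b)) (g : NilProd A B n) :
    ∃ a b, nilProdInl A B n a * nilProdInr A B n b = g := by
  let φ := (nilProdInl A B n).noncommCoprod (nilProdInr A B n) hcomm
  have hφ : φ.comp Coprod.toProd = QuotientGroup.mk' (nilProdKer A B n) := Coprod.hom_ext
    ((nilProdInl A B n).noncommCoprod_comp_inl _ hcomm)
    ((nilProdInl A B n).noncommCoprod_comp_inr _ hcomm)
  have hφ_surj : Function.Surjective φ := by
    refine .of_comp (g := Coprod.toProd) ?_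
    rw [← MonoidHom.coe_comp, hφ]
    exact QuotientGroup.mk'_surjective _
  obtain ⟨⟨a, b⟩, rfl⟩ := hφ_surj g
  exact ⟨a, b, rfl⟩

end NilpotentProduct

theorem pw_nilProd_central_case_general (A B : Type*) [Group A] [Group B] (n : ℕ)
    (X : Set A) (Y : Set B)
    (hcent : CA A B n = ⊤ ∨ CB A B n = ⊤) :
    max (palWidth A X) (palWidth B Y) ≤
        palWidth (NilProd A B n) (nilProdInl A B n '' X ∪ nilProdInr A B n '' Y) ∧
      palWidth (NilProd A B n) (nilProdInl A B n '' X ∪ nilProdInr A B n '' Y) ≤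
        palWidth A X + palWidth B Y := by
  refine ⟨max_le ?_ ?_, ?_⟩
  · refine palWidth_le_of_surjective ((MonoidHom.fst A B).comp (nilProdToProd A B n))
      (fun a => ⟨nilProdInl A B n a, rfl⟩) ?_
    rintro _ (⟨x, hx, rfl⟩ | ⟨y, -, rfl⟩) <;> simp_all
  · refine palWidth_le_of_surjective ((MonoidHom.snd A B).comp (nilProdToProd A B n))
      (fun b => ⟨nilProdInr A B n b, rfl⟩) ?_
    rintro _ (⟨x, -, rfl⟩ | ⟨y, hy, rfl⟩) <;> simp_all
  · exact palWidth_le_add_of_forall_eq_mul _ _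
      (fun x hx => Or.inl ⟨x, hx, rfl⟩) (fun y hy => Or.inr ⟨y, hy, rfl⟩)
      (exists_nilProdInl_mul_nilProdInr (commute_nilProdInl_nilProdInr hcent))

/-- Theorem 2(ii): if `A = C_A(B)` or `B = C_B(A)` then
`max{pw(A,X), pw(B,Y)} ≤ pw(G_n, X ∪ Y) ≤ pw(A,X) + pw(B,Y)`. -/
theorem pw_nilProd_central_case (A B : Type*) [Group A] [Group B] (n : ℕ) (hn : 2 ≤ n)
    (X : Set A) (Y : Set B) (hXsym : X⁻¹ = X) (hYsym : Y⁻¹ = Y)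
    (hXfin : X.Finite) (hYfin : Y.Finite)
    (hXgen : Subgroup.closure X = ⊤) (hYgen : Subgroup.closure Y = ⊤)
    (hcent : CA A B n = ⊤ ∨ CB A B n = ⊤) :
    max (palWidth A X) (palWidth B Y) ≤
        palWidth (NilProd A B n) (nilProdInl A B n '' X ∪ nilProdInr A B n '' Y) ∧
      palWidth (NilProd A B n) (nilProdInl A B n '' X ∪ nilProdInr A B n '' Y) ≤
        palWidth A X + palWidth B Y :=
  pw_nilProd_central_case_general A B n X Y hcent
end

section
/- Let K be a finite group of order l, n ≥ 2, and G = F_n ≀ K the wreath product, with Δ : G → ℤ defined by Δ((f_{k₁},…,f_{k_l})k) = Σ_{i=1}^l ql(f_{k_i}). Then for all g, h ∈ G: |Δ(gh) - Δ(g) - Δ(h)| ≤ 3l. -/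
/-- `tr m` is `-1, 0, 1` according as `m ≡ -1, 0, 1 (mod 3)`. -/
def tr (m : ℤ) : ℤ := if m % 3 = 0 then 0 else if m % 3 = 1 then 1 else -1

/-- `ql w` is the sum of `tr` of the exponents of the syllables in the
reduced syllable form of `w`: the reduced word `w.toWord` is split into maximal
runs (syllables) of letters with the same generator, and each syllable
`x_i ^ α` contributes `tr α`. -/
def ql {n : ℕ} (w : FreeGroup (Fin n)) : ℤ :=
  ((w.toWord.splitBy (fun p q => p.1 == q.1)).map
    (fun s => tr ((s.map (fun p => if p.2 then (1 : ℤ) else -1)).sum))).sum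

/-- The permutation action of `K` on the base group `K → H` of the wreath product
`H ≀ K`, by left translation on the index set: `(k • f) k' = f (k⁻¹ * k')`. -/
def wreathAction (H K : Type*) [Group H] [Group K] : K →* MulAut (K → H) where
  toFun k :=
    { toFun := fun f x => f (k⁻¹ * x)
      invFun := fun f x => f (k * x)
      left_inv := fun f => by funext x; simp [← mul_assoc]
      right_inv := fun f => by funext x; simp [← mul_assoc]
      map_mul' := fun f g => rfl }
  map_one' := by
    ext f x
    simp
  map_mul' := fun a b => by
    ext f x
    simp [mul_assoc]

/-- The wreath product `H ≀ K = (∏_{k ∈ K} H) ⋊ K`. -/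
abbrev WreathProduct (H K : Type*) [Group H] [Group K] :=
  SemidirectProduct (K → H) K (wreathAction H K)

/-- The quasi-homomorphism `Δ : Fₙ ≀ K → ℤ`, `Δ((f_{k₁}, …, f_{k_l})k) = Σᵢ ql(f_{kᵢ})`. -/
def Δ {n : ℕ} {K : Type*} [Group K] [Fintype K]
    (g : WreathProduct (FreeGroup (Fin n)) K) : ℤ :=
  ∑ k : K, ql (g.left k)

/-!
Write a word as its list of syllables `(i, α)`, standing for `x_i ^ α`, so that `ql` is the sum
of the `tr α`. Concatenating two syllable lists changes this sum only at the seam, where two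
syllables with the same generator merge, and there by `tr (a + b) - tr a - tr b ∈ {-3, 0, 3}`.
For reduced words `u`, `v` write `u = P C` and `v = C⁻¹ Q` with `P Q` reduced, so that `uv = P Q`:
the defect of `ql` at `(u, v)` is a combination of three seam terms, and a case check on residues
mod 3 bounds it by `3`. In `Fₙ ≀ K` the coordinates of `gh` are the products `f_k f'_{σ k}` for a
permutation `σ` of `K`, so the defects of the `l` coordinates add up to at most `3l`.
-/

open FreeGroup

theorem tr_neg (m : ℤ) : tr (-m) = -tr m := by
  simp only [tr]; split_ifs <;> omega

def trDefect (a b : ℤ) : ℤ := tr (a + b) - tr a - tr b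

theorem trDefect_eq_ite (a b : ℤ) : trDefect a b =
    if a % 3 = 2 ∧ b % 3 = 2 then 3 else if a % 3 = 1 ∧ b % 3 = 1 then -3 else 0 := by
  simp only [trDefect, tr]; split_ifs <;> omega

theorem abs_trDefect_le (a b : ℤ) : |trDefect a b| ≤ 3 := by
  rw [trDefect_eq_ite]; split_ifs <;> simp

theorem List.splitBy_cons_cons {α : Type*} {r : α → α → Bool} (a b : α) (l : List α) :
    (a :: b :: l).splitBy r =
      if r a b then ((b :: l).splitBy r).modifyHead (a :: ·) else [a] :: (b :: l).splitBy r := by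
  split_ifs with hab
  · obtain ⟨s, S, hsS⟩ := exists_cons_of_ne_nil (splitBy_ne_nil (r := r) |>.2 (cons_ne_nil b l))
    obtain ⟨c, s, rfl⟩ := exists_cons_of_ne_nil
      (ne_nil_of_mem_splitBy (r := r) (l := b :: l) (hsS ▸ mem_cons_self))
    obtain rfl : b = c := by simpa [hsS, eq_comm] using head_head_splitBy r (cons_ne_nil b l)
    have hflat := flatten_splitBy r (b :: l)
    have hchain := fun m => isChain_of_mem_splitBy (m := m) (r := r) (l := b :: l)
    have hseam := isChain_getLast_head_splitBy r (b :: l)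
    rw [hsS] at hflat hchain hseam ⊢
    rw [modifyHead_cons, splitBy_eq_iff]
    refine ⟨by simp [← hflat], by simpa using nil_notMem_splitBy r (b :: l) ∘ (hsS ▸ ·), ?_, ?_⟩
    · rintro m (_ | ⟨_, hm⟩)
      · exact isChain_cons_cons.2 ⟨hab, hchain _ mem_cons_self⟩
      · exact hchain m (mem_cons_of_mem _ hm)
    · cases S with
      | nil => exact isChain_singleton _
      | cons t S =>
        obtain ⟨⟨_, ht, hbt⟩, hS⟩ := isChain_cons_cons.1 hseam
        exact isChain_cons_cons.2 ⟨⟨cons_ne_nil _ _, ht, by rwa [getLast_cons]⟩, hS⟩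
  · exact splitBy_append_cons (l := [a]) l (by simpa using hab)

section Syllables

variable {α : Type*}

def letterExp (a : α × Bool) : ℤ := if a.2 then 1 else -1

theorem letterExp_inv (a : α × Bool) : letterExp (a.1, !a.2) = -letterExp a := by
  obtain ⟨_, _ | _⟩ := a <;> rfl

def syllableQl (S : List (α × ℤ)) : ℤ := (S.map (tr ·.2)).sum

@[simp] theorem syllableQl_nil : syllableQl ([] : List (α × ℤ)) = 0 := rfl

@[simp] theorem syllableQl_cons (x : α × ℤ) (S : List (α × ℤ)) :
    syllableQl (x :: S) = tr x.2 + syllableQl S := List.sum_cons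

def invSyllables (S : List (α × ℤ)) : List (α × ℤ) := (S.map (Prod.map id Neg.neg)).reverse

theorem syllableQl_invSyllables (S : List (α × ℤ)) :
    syllableQl (invSyllables S) = -syllableQl S := by
  simp [syllableQl, invSyllables, Function.comp_def, tr_neg, List.sum_neg]

variable [DecidableEq α]

def consSyllable (x : α × ℤ) : List (α × ℤ) → List (α × ℤ)
  | [] => [x]
  | y :: S => if x.1 = y.1 then (x.1, x.2 + y.2) :: S else x :: y :: S

def syllables (L : List (α × Bool)) : List (α × ℤ) :=
  L.foldr (fun a S => consSyllable (a.1, letterExp a) S) []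

@[simp] theorem syllables_nil : syllables ([] : List (α × Bool)) = [] := rfl

theorem syllables_cons (a : α × Bool) (L : List (α × Bool)) :
    syllables (a :: L) = consSyllable (a.1, letterExp a) (syllables L) := rfl

theorem exists_consSyllable_eq_cons (x : α × ℤ) (S : List (α × ℤ)) :
    ∃ e T, consSyllable x S = (x.1, e) :: T := by
  cases S with
  | nil => exact ⟨_, _, rfl⟩
  | cons y S =>
    by_cases h : x.1 = y.1
    · exact ⟨x.2 + y.2, S, by simp [consSyllable, h]⟩
    · exact ⟨x.2, y :: S, by simp [consSyllable, h]⟩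

theorem map_sum_splitBy_eq_map_snd_syllables (L : List (α × Bool)) :
    (L.splitBy (fun p q => p.1 == q.1)).map (fun s => (s.map letterExp).sum) =
      (syllables L).map Prod.snd := by
  induction L with
  | nil => rfl
  | cons a L ih =>
    cases L with
    | nil => simp [syllables_cons, consSyllable, show [a].splitBy _ = [[a]] from rfl]
    | cons b L =>
      obtain ⟨e, S, hS⟩ := exists_consSyllable_eq_cons (b.1, letterExp b) (syllables L)
      rw [← syllables_cons] at hS
      obtain ⟨s, T, hsT⟩ := List.exists_cons_of_ne_nil
        (List.splitBy_ne_nil (r := fun p q : α × Bool => p.1 == q.1) |>.2 (List.cons_ne_nil b L))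
      rw [hS, hsT, List.map_cons, List.map_cons, List.cons.injEq] at ih
      rw [List.splitBy_cons_cons, syllables_cons, hS, hsT]
      by_cases h : a.1 = b.1 <;> simp [consSyllable, h, ih.1, ih.2, letterExp]

def appendSyllables : List (α × ℤ) → List (α × ℤ) → List (α × ℤ)
  | [], T => T
  | [x], T => consSyllable x T
  | x :: y :: S, T => x :: appendSyllables (y :: S) T

theorem consSyllable_appendSyllables (x : α × ℤ) (S T : List (α × ℤ)) :
    consSyllable x (appendSyllables S T) = appendSyllables (consSyllable x S) T := by
  match S with
  | [] => rfl
  | [y] =>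
    cases T with
    | nil => by_cases h : x.1 = y.1 <;> simp [consSyllable, appendSyllables, h]
    | cons z T =>
      by_cases h : x.1 = y.1 <;> by_cases h' : y.1 = z.1 <;>
        simp_all [consSyllable, appendSyllables, add_assoc]
  | y :: z :: S =>
    by_cases h : x.1 = y.1 <;> simp [consSyllable, appendSyllables, h]

theorem syllables_append (L M : List (α × Bool)) :
    syllables (L ++ M) = appendSyllables (syllables L) (syllables M) := by
  induction L with
  | nil => rfl
  | cons a L ih =>
    rw [List.cons_append, syllables_cons, ih, consSyllable_appendSyllables, syllables_cons]

theorem appendSyllables_concat (S : List (α × ℤ)) (x : α × ℤ) (T : List (α × ℤ)) :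
    appendSyllables (S ++ [x]) T = S ++ consSyllable x T := by
  match S with
  | [] => rfl
  | [_] => rfl
  | y :: z :: S => exact congrArg (y :: ·) (appendSyllables_concat (z :: S) x T)

theorem appendSyllables_invSyllables (x : α × ℤ) (S : List (α × ℤ)) :
    appendSyllables (invSyllables S) [Prod.map id Neg.neg x] =
      invSyllables (consSyllable x S) := by
  cases S with
  | nil => rfl
  | cons y S =>
    simp only [invSyllables, List.map_cons, List.reverse_cons, appendSyllables_concat]
    by_cases h : x.1 = y.1 <;> simp [consSyllable, h, @eq_comm _ y.1]

theorem syllables_invRev (L : List (α × Bool)) :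
    syllables (invRev L) = invSyllables (syllables L) := by
  induction L with
  | nil => rfl
  | cons a L ih =>
    have h : syllables (invRev [a]) = [Prod.map id Neg.neg (a.1, letterExp a)] := by
      simp [invRev, syllables_cons, consSyllable, letterExp_inv]
    rw [invRev_cons, syllables_append, ih, syllables_cons, h, appendSyllables_invSyllables]

theorem getLast?_syllables_invRev (L : List (α × Bool)) :
    (syllables (invRev L)).getLast? = (syllables L).head?.map (Prod.map id Neg.neg) := by
  simp [syllables_invRev, invSyllables, List.getLast?_reverse, List.head?_map]

def seamDefect : Option (α × ℤ) → Option (α × ℤ) → ℤ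
  | some x, some y => if x.1 = y.1 then trDefect x.2 y.2 else 0
  | _, _ => 0

@[simp] theorem seamDefect_none_left (q : Option (α × ℤ)) : seamDefect none q = 0 := rfl

@[simp] theorem seamDefect_none_right (p : Option (α × ℤ)) : seamDefect p none = 0 := by
  cases p <;> rfl

theorem syllableQl_appendSyllables (S T : List (α × ℤ)) :
    syllableQl (appendSyllables S T) =
      syllableQl S + syllableQl T + seamDefect S.getLast? T.head? := by
  match S, T with
  | [], _ => simp [appendSyllables]
  | [_], [] => simp [appendSyllables, consSyllable]
  | [x], y :: T =>
    by_cases h : x.1 = y.1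
    · simp only [appendSyllables, consSyllable, seamDefect, trDefect, h, if_true,
        syllableQl_cons, syllableQl_nil, List.getLast?_singleton, List.head?_cons]
      ring
    · simp [appendSyllables, consSyllable, seamDefect, h]
  | x :: y :: S, T =>
    rw [appendSyllables, syllableQl_cons, syllableQl_appendSyllables (y :: S) T,
      List.getLast?_cons_cons, syllableQl_cons x]
    ring

theorem abs_seamDefect_le (p q : Option (α × ℤ)) : |seamDefect p q| ≤ 3 := by
  match p, q with
  | some x, some y =>
    simp only [seamDefect]
    split_ifs
    · exact abs_trDefect_le _ _
    · simp
  | none, _ | some _, none => simp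

theorem abs_seamDefect_sub_le (p c q : Option (α × ℤ)) :
    |seamDefect p q - seamDefect p c - seamDefect (c.map (Prod.map id Neg.neg)) q| ≤ 3 := by
  match p, c, q with
  | some x, some z, some y =>
    simp only [seamDefect, Option.map_some, Prod.map_fst, Prod.map_snd, id, trDefect_eq_ite]
    split_ifs <;> rw [abs_le] <;> omega
  | p, none, q => simpa using abs_seamDefect_le p q
  | none, some z, q => simpa using abs_seamDefect_le _ q
  | some x, some z, none => simpa using abs_seamDefect_le (some x) (some z)

def wordQl (L : List (α × Bool)) : ℤ := syllableQl (syllables L)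

theorem wordQl_append (L M : List (α × Bool)) : wordQl (L ++ M) =
    wordQl L + wordQl M + seamDefect (syllables L).getLast? (syllables M).head? := by
  rw [wordQl, syllables_append, syllableQl_appendSyllables, wordQl, wordQl]

theorem wordQl_invRev (L : List (α × Bool)) : wordQl (invRev L) = -wordQl L := by
  rw [wordQl, syllables_invRev, syllableQl_invSyllables, wordQl]

theorem abs_wordQl_sub_le (P C Q : List (α × Bool)) :
    |wordQl (P ++ Q) - wordQl (P ++ C) - wordQl (invRev C ++ Q)| ≤ 3 := by
  rw [wordQl_append, wordQl_append, wordQl_append, wordQl_invRev, getLast?_syllables_invRev]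
  convert abs_seamDefect_sub_le (syllables P).getLast? (syllables C).head? (syllables Q).head?
    using 2
  ring

end Syllables

theorem FreeGroup.IsReduced.exists_append_invRev_append {α : Type*} {u v : List (α × Bool)}
    (hu : IsReduced u) (hv : IsReduced v) :
    ∃ P C Q, u = P ++ C ∧ v = invRev C ++ Q ∧ IsReduced (P ++ Q) := by
  induction v generalizing u with
  | nil => exact ⟨u, [], [], by simp, by simp [invRev], by simpa using hu⟩
  | cons b v ih =>
    rcases u.eq_nil_or_concat' with rfl | ⟨u, a, rfl⟩
    · exact ⟨[], [], b :: v, by simp, by simp [invRev], hv⟩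
    by_cases hab : a = (b.1, !b.2)
    · obtain ⟨P, C, Q, rfl, rfl, hPQ⟩ :=
        ih (hu.infix ⟨[], [a], rfl⟩) (hv.infix ⟨[b], [], by simp⟩)
      exact ⟨P, C ++ [a], Q, by simp, by simp [invRev, hab], hPQ⟩
    · refine ⟨u ++ [a], [], b :: v, by simp, by simp [invRev], ?_⟩
      refine hu.append_overlap (L₂ := [a]) (isReduced_cons_cons.2 ⟨?_, hv⟩) (List.cons_ne_nil _ _)
      exact fun h₁ => by_contra fun h₂ => hab (Prod.ext h₁ (Bool.eq_not_iff.2 h₂))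

theorem FreeGroup.toWord_mul_of_eq_append {α : Type*} [DecidableEq α] {x y : FreeGroup α}
    {P C Q : List (α × Bool)} (hx : x.toWord = P ++ C) (hy : y.toWord = invRev C ++ Q)
    (hPQ : IsReduced (P ++ Q)) : (x * y).toWord = P ++ Q := by
  rw [← hPQ.reduce_eq, ← toWord_mk, ← mk_toWord (x := x), ← mk_toWord (x := y), hx, hy,
    ← mul_mk, ← mul_mk, ← inv_mk, ← mul_mk]
  group

theorem ql_eq_wordQl {n : ℕ} (w : FreeGroup (Fin n)) : ql w = wordQl w.toWord := by
  have h := congrArg (fun l => (l.map tr).sum) (map_sum_splitBy_eq_map_snd_syllables w.toWord)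
  simp only [List.map_map] at h
  exact h

theorem abs_ql_mul_sub_le {n : ℕ} (u v : FreeGroup (Fin n)) :
    |ql (u * v) - ql u - ql v| ≤ 3 := by
  obtain ⟨P, C, Q, hu, hv, hPQ⟩ :=
    (isReduced_toWord (x := u)).exists_append_invRev_append (isReduced_toWord (x := v))
  rw [ql_eq_wordQl, ql_eq_wordQl, ql_eq_wordQl, toWord_mul_of_eq_append hu hv hPQ, hu, hv]
  exact abs_wordQl_sub_le P C Q

theorem abs_sum_wreathProduct_mul_sub_le {H K : Type*} [Group H] [Group K] [Fintype K]
    (φ : H → ℤ) {D : ℤ} (hφ : ∀ a b, |φ (a * b) - φ a - φ b| ≤ D) (g h : WreathProduct H K) :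
    |∑ k, φ ((g * h).left k) - ∑ k, φ (g.left k) - ∑ k, φ (h.left k)| ≤ Fintype.card K * D := by
  have hh : ∑ k, φ (h.left k) = ∑ k, φ (h.left (g.right⁻¹ * k)) :=
    (Equiv.sum_comp (Equiv.mulLeft g.right⁻¹) (fun k => φ (h.left k))).symm
  rw [hh, ← Finset.sum_sub_distrib, ← Finset.sum_sub_distrib]
  calc _ ≤ ∑ k, |φ (g.left k * h.left (g.right⁻¹ * k)) - φ (g.left k)
          - φ (h.left (g.right⁻¹ * k))| := Finset.abs_sum_le_sum_abs _ _
    _ ≤ ∑ _k : K, D := Finset.sum_le_sum fun _ _ => hφ _ _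
    _ = Fintype.card K * D := by simp

theorem delta_quasimorphism_general (n : ℕ) (K : Type*) [Group K] [Fintype K]
    (g h : WreathProduct (FreeGroup (Fin n)) K) :
    |Δ (g * h) - Δ g - Δ h| ≤ 3 * (Fintype.card K : ℤ) :=
  (abs_sum_wreathProduct_mul_sub_le ql abs_ql_mul_sub_le g h).trans_eq (mul_comm _ _)

/-- For all `g, h ∈ Fₙ ≀ K`: `|Δ(gh) - Δ(g) - Δ(h)| ≤ 3l`, where `l = |K|`. -/
theorem delta_quasimorphism (n : ℕ) (hn : 2 ≤ n) (K : Type*) [Group K] [Fintype K]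
    (g h : WreathProduct (FreeGroup (Fin n)) K) :
    |Δ (g * h) - Δ g - Δ h| ≤ 3 * (Fintype.card K : ℤ) :=
  delta_quasimorphism_general n K g h
end
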